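/- Let A, B be n₁ × n₁ and C, D be n₂ × n₂ complex matrices, and let d₁, d₂ ≥ 1. Suppose u₁, …, u_{d₁} ∈ ℂ^{n₁} satisfy B u₁ = 0 and B u_{i+1} = A u_i for i = 1, …, d₁−1, and v₁, …, v_{d₂} ∈ ℂ^{n₂} satisfy D v₁ = 0 and D v_{i+1} = C v_i for i = 1, …, d₂−1. Then for every j with 1 ≤ j ≤ min(d₁, d₂), the vector z_j = ∑_{i=1}^{j} u_i ⊗ v_{j+1−i} ∈ ℂ^{n₁ n₂} satisfies (A ⊗ D − B ⊗ C) z_j = 0. -/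
import Mathlib


open Matrix Kronecker Finset

/-- Kronecker product of vectors. -/
def vkron {n₁ n₂ : ℕ} (x : Fin n₁ → ℂ) (y : Fin n₂ → ℂ) : Fin n₁ × Fin n₂ → ℂ :=
  fun p => x p.1 * y p.2

lemma vkron_zero_left {n₁ n₂ : ℕ} (y : Fin n₂ → ℂ) : vkron (0 : Fin n₁ → ℂ) y = 0 := by
  funext p; simp [vkron]

lemma vkron_zero_right {n₁ n₂ : ℕ} (x : Fin n₁ → ℂ) : vkron x (0 : Fin n₂ → ℂ) = 0 := by
  funext p; simp [vkron]

lemma kron_mulVec {n₁ n₂ : ℕ} (M : Matrix (Fin n₁) (Fin n₁) ℂ)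
    (N : Matrix (Fin n₂) (Fin n₂) ℂ) (x : Fin n₁ → ℂ) (y : Fin n₂ → ℂ) :
    (M ⊗ₖ N).mulVec (vkron x y) = vkron (M.mulVec x) (N.mulVec y) := by
  funext p
  simp only [Matrix.mulVec, vkron, dotProduct, kroneckerMap_apply,
    Fintype.sum_prod_type, Finset.sum_mul, Finset.mul_sum]
  rw [Finset.sum_comm]
  apply Finset.sum_congr rfl
  intro b _
  apply Finset.sum_congr rfl
  intro a _
  ring

lemma telescope_Icc {V : Type*} [AddCommGroup V] (h : ℕ → V) (j : ℕ) :
    ∑ i ∈ Finset.Icc 1 j, (h i - h (i - 1)) = h j - h 0 := by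
  induction j with
  | zero => simp
  | succ m ih =>
      rw [Finset.sum_Icc_succ_top (by omega), ih]
      simp

/-- **Kernel vectors of `Δ = A ⊗ D − B ⊗ C` from a pair of infinite blocks.**
If `B u₁ = 0` and `B u_{i+1} = A uᵢ` for `1 ≤ i ≤ d₁ − 1`, and `D v₁ = 0` and
`D v_{i+1} = C vᵢ` for `1 ≤ i ≤ d₂ − 1`, then for every `1 ≤ j ≤ min(d₁,d₂)` the
vector `z_j = ∑_{i=1}^{j} uᵢ ⊗ v_{j+1−i}` lies in the kernel of `A ⊗ D − B ⊗ C`. -/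
theorem infinite_pair_kernel_vectors {n₁ n₂ d₁ d₂ : ℕ} (hd₁ : 1 ≤ d₁) (hd₂ : 1 ≤ d₂)
    (A B : Matrix (Fin n₁) (Fin n₁) ℂ) (C D : Matrix (Fin n₂) (Fin n₂) ℂ)
    (u : ℕ → Fin n₁ → ℂ) (v : ℕ → Fin n₂ → ℂ)
    (hu1 : B.mulVec (u 1) = 0)
    (hu : ∀ i : ℕ, 1 ≤ i → i ≤ d₁ - 1 → B.mulVec (u (i + 1)) = A.mulVec (u i))
    (hv1 : D.mulVec (v 1) = 0)
    (hv : ∀ i : ℕ, 1 ≤ i → i ≤ d₂ - 1 → D.mulVec (v (i + 1)) = C.mulVec (v i)) :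
    ∀ j : ℕ, 1 ≤ j → j ≤ min d₁ d₂ →
      (A ⊗ₖ D - B ⊗ₖ C).mulVec (∑ i ∈ Finset.Icc 1 j, vkron (u i) (v (j + 1 - i))) = 0 := by
  intro j hj1 hj2
  have hjd₁ : j ≤ d₁ := le_trans hj2 (min_le_left _ _)
  have hjd₂ : j ≤ d₂ := le_trans hj2 (min_le_right _ _)
  -- the telescoping function
  set g : ℕ → Fin n₁ × Fin n₂ → ℂ :=
    fun i => vkron (B.mulVec (u (i + 1))) (D.mulVec (v (j + 1 - i))) with hg
  have key : ∀ i ∈ Finset.Icc 1 j,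
      (A ⊗ₖ D - B ⊗ₖ C).mulVec (vkron (u i) (v (j + 1 - i))) = g i - g (i - 1) := by
    intro i hi
    rw [Finset.mem_Icc] at hi
    obtain ⟨hi1, hij⟩ := hi
    rw [Matrix.sub_mulVec, kron_mulVec, kron_mulVec]
    have e1 : vkron (A.mulVec (u i)) (D.mulVec (v (j + 1 - i))) = g i := by
      rcases le_or_gt i (d₁ - 1) with h | h
      · simp only [hg]; rw [hu i hi1 h]
      · -- i ≥ d₁, so i = j = d₁ and j + 1 - i = 1
        have : i = j := le_antisymm hij (by omega)
        have h2 : j + 1 - i = 1 := by omega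
        simp only [hg]; rw [h2, hv1, vkron_zero_right, vkron_zero_right]
    have e2 : vkron (B.mulVec (u i)) (C.mulVec (v (j + 1 - i))) = g (i - 1) := by
      have hi' : i - 1 + 1 = i := by omega
      rcases le_or_gt (j + 1 - i) (d₂ - 1) with h | h
      · have h1 : 1 ≤ j + 1 - i := by omega
        have h2 : j + 1 - (i - 1) = (j + 1 - i) + 1 := by omega
        simp only [hg]; rw [h2, hv _ h1 h, hi']
      · -- j + 1 - i ≥ d₂, so i = 1, j = d₂
        have : i = 1 := by omega
        subst this
        simp only [hg]; rw [hu1, vkron_zero_left, vkron_zero_left]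
    rw [e1, e2]
  rw [← Matrix.mulVecLin_apply, map_sum]
  simp only [Matrix.mulVecLin_apply]
  rw [Finset.sum_congr rfl key]
  rw [telescope_Icc]
  have hg0 : g 0 = 0 := by
    simp only [hg, Nat.zero_add]
    rw [hu1, vkron_zero_left]
  have hgj : g j = 0 := by
    simp only [hg]
    have : j + 1 - j = 1 := by omega
    rw [this, hv1, vkron_zero_right]
  rw [hg0, hgj, sub_zero]
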